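/- arXiv:1209.5402 — 5 statements merged into one kernel-verified Lean document; each statement's English description precedes it below -/
import Mathlib

section
/- Fix δ > 0 and r₀ ∈ (0,1). For each integer n ≥ 1 let S_n : [0,1) → ℝ be a differentiable non-decreasing function with S_n(r₀) ≥ n^{2/δ}. Then the set E = { r ∈ [r₀, 1) : S_n′(r) ≥ S_n(r)^{1+δ}·(1−r²)^{−1} for some n } has finite hyperbolic measure; in fact ∫_E (1−r²)^{−1} dr ≤ π²/(6δ). -/
/-!
For each `n`, the function `φ = -S_n^{-δ}/δ` is non-decreasing on `[r₀, 1)`, bounded above by `0`,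
and has derivative `S_n' / S_n^{1+δ}`, which dominates the hyperbolic density `(1 - r²)⁻¹` on the
`n`-th exceptional set. So that set has hyperbolic measure at most the total increase of `φ`, namely
`S_n(r₀)^{-δ}/δ ≤ 1/(δ n²)`, and summing over `n` gives `π²/(6δ)`.
-/

open MeasureTheory Real Set

theorem Monotone.lintegral_deriv_Ioc_le {g : ℝ → ℝ} (hg : Monotone g) {a b c : ℝ} (hbc : b < c) :
    ∫⁻ x in Ioc a b, ENNReal.ofReal (deriv g x) ≤ ENNReal.ofReal (g c - g a) := by
  -- `deriv g` is a.e. the density of the Stieltjes measure of `g`, whose distribution function is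
  -- the right limit of `g`: hence the comparison with `g c` for some `c > b`.
  set ν := hg.stieltjesFunction.measure
  have hderiv : ∀ᵐ x, deriv g x = (ν.rnDeriv volume x).toReal := by
    filter_upwards [hg.ae_hasDerivAt] with x hx using hx.deriv
  calc ∫⁻ x in Ioc a b, ENNReal.ofReal (deriv g x)
      = ∫⁻ x in Ioc a b, ENNReal.ofReal (ν.rnDeriv volume x).toReal :=
        lintegral_congr_ae (ae_restrict_of_ae (by filter_upwards [hderiv] with x hx; rw [hx]))
    _ ≤ ∫⁻ x in Ioc a b, ν.rnDeriv volume x := lintegral_mono fun _ => ENNReal.ofReal_toReal_le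
    _ ≤ ν (Ioc a b) := Measure.setLIntegral_rnDeriv_le _
    _ = ENNReal.ofReal (hg.stieltjesFunction b - hg.stieltjesFunction a) :=
        StieltjesFunction.measure_Ioc _ _ _
    _ ≤ ENNReal.ofReal (g c - g a) := by
        gcongr
        · rw [hg.stieltjesFunction_eq]; exact hg.rightLim_le hbc
        · rw [hg.stieltjesFunction_eq]; exact hg.le_rightLim le_rfl

theorem MonotoneOn.lintegral_deriv_Ioo_le {f : ℝ → ℝ} {a b M : ℝ} (hab : a < b)
    (hf : MonotoneOn f (Ico a b)) (hM : ∀ x ∈ Ico a b, f x ≤ M) :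
    ∫⁻ x in Ioo a b, ENNReal.ofReal (deriv f x) ≤ ENNReal.ofReal (M - f a) := by
  set g : ℝ → ℝ := fun x => if x < b then f (max a x) else M
  have hmem : ∀ x < b, max a x ∈ Ico a b := fun x hx => ⟨le_max_left _ _, max_lt hab hx⟩
  have hg : Monotone g := by
    intro x y hxy
    by_cases hy : y < b
    · simp only [g, if_pos hy, if_pos (hxy.trans_lt hy)]
      exact hf (hmem x (hxy.trans_lt hy)) (hmem y hy) (max_le_max le_rfl hxy)
    · by_cases hx : x < b
      · simp only [g, if_pos hx, if_neg hy]; exact hM _ (hmem x hx)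
      · simp only [g, if_neg hx, if_neg hy, le_refl]
  have hfg : ∀ x ∈ Ioo a b, deriv f x = deriv g x := by
    intro x hx
    refine Filter.EventuallyEq.deriv_eq ?_
    filter_upwards [isOpen_Ioo.mem_nhds hx] with y hy
    simp only [g, if_pos hy.2, max_eq_right hy.1.le]
  calc ∫⁻ x in Ioo a b, ENNReal.ofReal (deriv f x)
      = ∫⁻ x in Ioo a b, ENNReal.ofReal (deriv g x) :=
        setLIntegral_congr_fun measurableSet_Ioo fun x hx => by rw [hfg x hx]
    _ ≤ ∫⁻ x in Ioc a b, ENNReal.ofReal (deriv g x) := lintegral_mono_set Ioo_subset_Ioc_self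
    _ ≤ ENNReal.ofReal (g (b + 1) - g a) := hg.lintegral_deriv_Ioc_le (lt_add_one b)
    _ = ENNReal.ofReal (M - f a) := by
        simp only [g, if_neg (lt_add_one b).not_gt, if_pos hab, max_self]

theorem HasDerivAt.neg_rpow_neg_div {S : ℝ → ℝ} {S' x δ : ℝ} (hS : HasDerivAt S S' x)
    (hx : 0 < S x) (hδ : δ ≠ 0) :
    HasDerivAt (fun y => -(S y ^ (-δ) / δ)) (S' / S x ^ (1 + δ)) x := by
  refine ((hS.rpow_const (p := -δ) (Or.inl hx.ne')).div_const δ).fun_neg.congr_deriv ?_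
  rw [show -δ - 1 = -(1 + δ) by ring, rpow_neg hx.le]
  field_simp

theorem withDensity_setOf_rpow_mul_le_deriv_le {S w : ℝ → ℝ} {a b δ : ℝ} (hab : a < b)
    (hδ : 0 < δ) (hw : Measurable w) (hS : ∀ x ∈ Ico a b, DifferentiableAt ℝ S x)
    (hS_mono : MonotoneOn S (Ico a b)) (hSa : 0 < S a) :
    volume.withDensity (fun x => ENNReal.ofReal (w x))
        {x | x ∈ Ico a b ∧ S x ^ (1 + δ) * w x ≤ deriv S x}
      ≤ ENNReal.ofReal (S a ^ (-δ) / δ) := by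
  set E := {x | x ∈ Ico a b ∧ S x ^ (1 + δ) * w x ≤ deriv S x}
  have hpos : ∀ x ∈ Ico a b, 0 < S x :=
    fun x hx => hSa.trans_le (hS_mono (left_mem_Ico.2 hab) hx hx.1)
  set φ : ℝ → ℝ := fun x => -(S x ^ (-δ) / δ)
  have hφ_deriv : ∀ x ∈ Ico a b, deriv φ x = deriv S x / S x ^ (1 + δ) := fun x hx =>
    ((hS x hx).hasDerivAt.neg_rpow_neg_div (hpos x hx) hδ.ne').deriv
  have hφ_mono : MonotoneOn φ (Ico a b) := fun x hx y hy hxy => by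
    have := rpow_le_rpow_of_nonpos (hpos x hx) (hS_mono hx hy hxy) (neg_nonpos.2 hδ.le)
    simp only [φ, neg_le_neg_iff]
    gcongr
  have hφ_nonpos : ∀ x ∈ Ico a b, φ x ≤ 0 := fun x hx => by
    simp only [φ, neg_nonpos]; exact div_nonneg (rpow_pos_of_pos (hpos x hx) _).le hδ.le
  have hE : MeasurableSet E := by
    have hT : Measurable ((Ico a b).indicator S) := by
      rw [← piecewise_eq_indicator]
      exact ContinuousOn.measurable_piecewise
        (fun x hx => (hS x hx).continuousAt.continuousWithinAt) continuousOn_const measurableSet_Ico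
    have : E = Ico a b ∩ {x | (Ico a b).indicator S x ^ (1 + δ) * w x ≤ deriv S x} := by
      ext x
      exact and_congr_right fun hx => by simp [indicator_of_mem hx]
    rw [this]
    exact measurableSet_Ico.inter (measurableSet_le ((hT.pow_const _).mul hw) (measurable_deriv S))
  calc volume.withDensity (fun x => ENNReal.ofReal (w x)) E
      = ∫⁻ x in E, ENNReal.ofReal (w x) := withDensity_apply _ hE
    _ ≤ ∫⁻ x in E, ENNReal.ofReal (deriv φ x) := setLIntegral_mono' hE fun x ⟨hx, hxE⟩ => by
        rw [hφ_deriv x hx]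
        refine ENNReal.ofReal_le_ofReal ?_
        rwa [le_div_iff₀ (rpow_pos_of_pos (hpos x hx) _), mul_comm]
    _ ≤ ∫⁻ x in Ico a b, ENNReal.ofReal (deriv φ x) := lintegral_mono_set fun x hx => hx.1
    _ = ∫⁻ x in Ioo a b, ENNReal.ofReal (deriv φ x) := by rw [restrict_Ioo_eq_restrict_Ico]
    _ ≤ ENNReal.ofReal (0 - φ a) := hφ_mono.lintegral_deriv_Ioo_le hab hφ_nonpos
    _ = ENNReal.ofReal (S a ^ (-δ) / δ) := by rw [zero_sub, neg_neg]

theorem rpow_neg_le_inv_sq_of_rpow_two_div_le {x y δ : ℝ} (hδ : 0 < δ) (hx : 0 < x)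
    (h : x ^ (2 / δ) ≤ y) : y ^ (-δ) ≤ (x ^ 2)⁻¹ := by
  calc y ^ (-δ) ≤ (x ^ (2 / δ)) ^ (-δ) :=
        rpow_le_rpow_of_nonpos (rpow_pos_of_pos hx _) h (neg_nonpos.2 hδ.le)
    _ = (x ^ 2)⁻¹ := by
        rw [← rpow_mul hx.le, show 2 / δ * -δ = -(2 : ℕ) by field_simp; norm_num,
          rpow_neg hx.le, rpow_natCast]

theorem ENNReal.tsum_ofReal_div_succ_sq {c : ℝ} (hc : 0 ≤ c) :
    ∑' n : ℕ, ENNReal.ofReal (c / ((n : ℝ) + 1) ^ 2) = ENNReal.ofReal (c * (π ^ 2 / 6)) := by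
  have hsum : HasSum (fun n : ℕ => c / ((n : ℝ) + 1) ^ 2) (c * (π ^ 2 / 6)) := by
    have := (hasSum_nat_add_iff' 1).2 (hasSum_zeta_two.mul_left c)
    simpa [div_eq_mul_inv] using this
  rw [← ENNReal.ofReal_tsum_of_nonneg (fun n => by positivity) hsum.summable, hsum.tsum_eq]

/-- Borel–Nevanlinna type growth lemma (paper's Claim 1): the set of radii where some
`S n` grows faster than `S n ^ (1+δ) / (1-r²)` has hyperbolic measure at most `π²/(6δ)`. -/
theorem stmt_0 (δ r₀ : ℝ) (hδ : 0 < δ) (hr₀ : r₀ ∈ Ioo (0:ℝ) 1)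
    (S : ℕ → ℝ → ℝ)
    (hdiff : ∀ n : ℕ, 1 ≤ n → ∀ r ∈ Ico (0:ℝ) 1, DifferentiableAt ℝ (S n) r)
    (hmono : ∀ n : ℕ, 1 ≤ n → MonotoneOn (S n) (Ico (0:ℝ) 1))
    (hgrow : ∀ n : ℕ, 1 ≤ n → (n : ℝ) ^ ((2:ℝ) / δ) ≤ S n r₀) :
    (volume.withDensity fun r : ℝ => ENNReal.ofReal ((1 - r ^ 2)⁻¹))
        {r : ℝ | r ∈ Ico r₀ 1 ∧
          ∃ n : ℕ, 1 ≤ n ∧ (S n r) ^ ((1:ℝ) + δ) * (1 - r ^ 2)⁻¹ ≤ deriv (S n) r}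
      ≤ ENNReal.ofReal (π ^ 2 / (6 * δ)) := by
  set μ := volume.withDensity fun r : ℝ => ENNReal.ofReal ((1 - r ^ 2)⁻¹)
  set E : ℕ → Set ℝ := fun n =>
    {r | r ∈ Ico r₀ 1 ∧ S (n + 1) r ^ ((1:ℝ) + δ) * (1 - r ^ 2)⁻¹ ≤ deriv (S (n + 1)) r}
  have hE : ∀ n, μ (E n) ≤ ENNReal.ofReal (δ⁻¹ / ((n : ℝ) + 1) ^ 2) := fun n => by
    have hn : 1 ≤ n + 1 := Nat.le_add_left 1 n
    have hIco : Ico r₀ 1 ⊆ Ico 0 1 := Ico_subset_Ico_left hr₀.1.le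
    have hgrow' : ((n : ℝ) + 1) ^ (2 / δ) ≤ S (n + 1) r₀ := by exact_mod_cast hgrow (n + 1) hn
    refine (withDensity_setOf_rpow_mul_le_deriv_le hr₀.2 hδ (by fun_prop)
      (fun r hr => hdiff _ hn r (hIco hr)) ((hmono _ hn).mono hIco)
      ((rpow_pos_of_pos (by positivity) _).trans_le hgrow')).trans (ENNReal.ofReal_le_ofReal ?_)
    rw [div_eq_inv_mul, div_eq_mul_inv]
    gcongr
    exact rpow_neg_le_inv_sq_of_rpow_two_div_le hδ (by positivity) hgrow'
  calc μ _ ≤ μ (⋃ n, E n) := measure_mono <| by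
        rintro r ⟨hr, n, hn, hrn⟩
        obtain ⟨k, rfl⟩ := Nat.exists_eq_add_of_le' hn
        exact mem_iUnion.2 ⟨k, hr, hrn⟩
    _ ≤ ∑' n, μ (E n) := measure_iUnion_le E
    _ ≤ ∑' n : ℕ, ENNReal.ofReal (δ⁻¹ / ((n : ℝ) + 1) ^ 2) := ENNReal.tsum_le_tsum hE
    _ = ENNReal.ofReal (π ^ 2 / (6 * δ)) := by
        rw [ENNReal.tsum_ofReal_div_succ_sq (inv_nonneg.2 hδ.le)]
        congr 1
        field_simp
end

section
/- Let r > 0 and let μ and ν be finite Borel measures on the open interval (0,r). Suppose that for every bounded Borel function ρ : (0,r) → ℝ one has ∫_{(0,r)} ρ dμ = ∫_{(0,r)} N_r(ρ)(s) dν(s), where N_r(ρ)(s) := (log(r/s))^{−1} ∫_{(s,r)} ρ(t)·t^{−1} dt. Then for any 0 ≤ a < b ≤ r with μ((a,b)) = 0, one has ν((0,b)) = 0. -/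
/-!
Test the transform identity against `ρ = 1_{(a,b)}`; the left side is `μ (a,b) = 0`.
For `0 < s < r` one computes `N_r(ρ)(s) = log (b / min (max s a) b) / log (r / s)`, which lies
in `[0, 1]` and is strictly positive when `s < b`. So `N_r(ρ)` is a bounded nonnegative function
with vanishing `ν`-integral that is positive on `(0, b)`, whence `ν (0, b) = 0`.
-/

open MeasureTheory Real Set

noncomputable def nevanlinnaTransform (r : ℝ) (ψ : ℝ → ℝ) (s : ℝ) : ℝ :=
  (log (r / s))⁻¹ * ∫ t in Ioo s r, ψ t * t⁻¹

theorem measurable_nevanlinnaTransform {r : ℝ} {ψ : ℝ → ℝ} (hψ : Measurable ψ) :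
    Measurable (nevanlinnaTransform r ψ) := by
  have hF : StronglyMeasurable fun p : ℝ × ℝ ↦
      {p : ℝ × ℝ | p.1 < p.2 ∧ p.2 < r}.indicator (fun p ↦ ψ p.2 * p.2⁻¹) p := by
    refine (Measurable.indicator ?_ ?_).stronglyMeasurable
    · exact (hψ.comp measurable_snd).mul measurable_snd.inv
    · exact (measurableSet_lt measurable_fst measurable_snd).inter
        (measurableSet_lt measurable_snd measurable_const)
  refine (measurable_const.div measurable_id).log.inv.mul ?_
  convert (hF.integral_prod_right' (ν := volume)).measurable using 2 with s
  rw [← integral_indicator measurableSet_Ioo]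
  rfl

theorem setIntegral_Ioo_indicator_Ioo_mul_inv {r a b s : ℝ} (hs : 0 < s) (hbr : b ≤ r) :
    ∫ t in Ioo s r, (Ioo a b).indicator 1 t * t⁻¹ = log (b / min (max s a) b) := by
  simp_rw [← indicator_mul_left, Pi.one_apply, one_mul]
  rw [setIntegral_indicator measurableSet_Ioo, Ioo_inter_Ioo, min_eq_right hbr]
  rcases le_or_gt (max s a) b with hb | hb
  · rw [min_eq_left hb, ← integral_Ioc_eq_integral_Ioo, ← intervalIntegral.integral_of_le hb,
      integral_inv_of_pos (hs.trans_le (le_max_left s a))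
        (hs.trans_le ((le_max_left s a).trans hb))]
  · rw [Ioo_eq_empty (not_lt.2 hb.le), min_eq_right hb.le, Measure.restrict_empty,
      integral_zero_measure]
    rcases eq_or_ne b 0 with rfl | hb0 <;> simp [*]

theorem measure_eq_zero_of_integral_eq_zero_of_forall_pos {α : Type*} [MeasurableSpace α]
    {μ : Measure α} {f : α → ℝ} (hf : 0 ≤ᵐ[μ] f) (hfi : Integrable f μ)
    (h : ∫ x, f x ∂μ = 0) {S : Set α} (hS : ∀ x ∈ S, 0 < f x) : μ S = 0 :=
  measure_mono_null (fun x hx ↦ (hS x hx).ne') <|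
    ae_iff.1 <| (integral_eq_zero_iff_of_nonneg_ae hf hfi).1 h

section IndicatorIoo

variable {r a b s : ℝ}

theorem nevanlinnaTransform_indicator_Ioo (hs : 0 < s) (hbr : b ≤ r) :
    nevanlinnaTransform r ((Ioo a b).indicator 1) s =
      (log (r / s))⁻¹ * log (b / min (max s a) b) := by
  rw [nevanlinnaTransform, setIntegral_Ioo_indicator_Ioo_mul_inv hs hbr]

theorem nevanlinnaTransform_indicator_Ioo_mem_Icc (hs : s ∈ Ioo 0 r) (hb : 0 < b) (hbr : b ≤ r) :
    nevanlinnaTransform r ((Ioo a b).indicator 1) s ∈ Icc 0 1 := by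
  rw [nevanlinnaTransform_indicator_Ioo hs.1 hbr]
  have hc : 0 < min (max s a) b := lt_min (hs.1.trans_le (le_max_left s a)) hb
  have hlog_rs : 0 < log (r / s) := log_pos ((one_lt_div hs.1).2 hs.2)
  have hlog_b : 0 ≤ log (b / min (max s a) b) := log_nonneg ((one_le_div hc).2 (min_le_right _ _))
  have hratio : b / min (max s a) b ≤ r / s := by
    rcases le_total (max s a) b with h | h
    · rw [min_eq_left h]
      exact div_le_div₀ (hb.le.trans hbr) hbr hs.1 (le_max_left s a)
    · rw [min_eq_right h, div_self hb.ne']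
      exact ((one_lt_div hs.1).2 hs.2).le
  exact ⟨mul_nonneg (inv_nonneg.2 hlog_rs.le) hlog_b,
    inv_mul_le_one_of_le₀ (log_le_log (div_pos hb hc) hratio) hlog_rs.le⟩

theorem nevanlinnaTransform_indicator_Ioo_pos (hab : a < b) (hbr : b ≤ r) (hs : s ∈ Ioo 0 b) :
    0 < nevanlinnaTransform r ((Ioo a b).indicator 1) s := by
  have hsa : max s a < b := max_lt hs.2 hab
  rw [nevanlinnaTransform_indicator_Ioo hs.1 hbr, min_eq_left hsa.le]
  exact mul_pos (inv_pos.2 (log_pos ((one_lt_div hs.1).2 (hs.2.trans_le hbr))))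
    (log_pos ((one_lt_div (hs.1.trans_le (le_max_left s a))).2 hsa))

end IndicatorIoo

theorem stmt_3_general (r : ℝ) (μ ν : Measure ℝ)
    [IsFiniteMeasure ν]
    (hνsupp : ν (Ioo (0:ℝ) r)ᶜ = 0)
    (htrans : ∀ ρ : ℝ → ℝ, Measurable ρ → (∃ C : ℝ, ∀ x, |ρ x| ≤ C) →
      (∫ x, ρ x ∂μ) =
        ∫ s, ((Real.log (r / s))⁻¹ * ∫ t in Ioo s r, ρ t * t⁻¹) ∂ν)
    (a b : ℝ) (ha : 0 ≤ a) (hab : a < b) (hbr : b ≤ r)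
    (hμ0 : μ (Ioo a b) = 0) :
    ν (Ioo 0 b) = 0 := by
  set ρ : ℝ → ℝ := (Ioo a b).indicator 1
  have hρ : Measurable ρ := measurable_const.indicator measurableSet_Ioo
  have hρ_bdd : ∃ C : ℝ, ∀ x, |ρ x| ≤ C :=
    ⟨1, fun x ↦ by by_cases hx : x ∈ Ioo a b <;> simp [ρ, hx]⟩
  have hν : ∀ᵐ s ∂ν, s ∈ Ioo 0 r := measure_mono_null (fun _ ↦ id) hνsupp
  have hNρ : ∀ᵐ s ∂ν, nevanlinnaTransform r ρ s ∈ Icc 0 1 := by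
    filter_upwards [hν] with s hs
    exact nevanlinnaTransform_indicator_Ioo_mem_Icc hs (ha.trans_lt hab) hbr
  have hint : ∫ s, nevanlinnaTransform r ρ s ∂ν = 0 := by
    unfold nevanlinnaTransform
    rw [← htrans ρ hρ hρ_bdd, integral_indicator_one measurableSet_Ioo,
      measureReal_def, hμ0, ENNReal.toReal_zero]
  refine measure_eq_zero_of_integral_eq_zero_of_forall_pos (hNρ.mono fun s hs ↦ hs.1) ?_ hint
    fun s hs ↦ nevanlinnaTransform_indicator_Ioo_pos hab hbr hs
  refine .of_bound (measurable_nevanlinnaTransform hρ).aestronglyMeasurable 1 ?_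
  filter_upwards [hNρ] with s hs
  exact (norm_of_nonneg hs.1).trans_le hs.2

/-- Part (a) of the paper's Lemma on limit measures: if `μ` and `ν` are finite Borel
measures on `(0,r)` related by the Nevanlinna transform
`∫ ρ dμ = ∫ N_r(ρ)(s) dν(s)` for all bounded Borel `ρ`, and `μ` has no mass on `(a,b)`,
then `ν` has no mass on `(0,b)`. -/
theorem stmt_3 (r : ℝ) (hr : 0 < r) (μ ν : Measure ℝ)
    [IsFiniteMeasure μ] [IsFiniteMeasure ν]
    (hμsupp : μ (Ioo (0:ℝ) r)ᶜ = 0) (hνsupp : ν (Ioo (0:ℝ) r)ᶜ = 0)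
    (htrans : ∀ ρ : ℝ → ℝ, Measurable ρ → (∃ C : ℝ, ∀ x, |ρ x| ≤ C) →
      (∫ x, ρ x ∂μ) =
        ∫ s, ((Real.log (r / s))⁻¹ * ∫ t in Ioo s r, ρ t * t⁻¹) ∂ν)
    (a b : ℝ) (ha : 0 ≤ a) (hab : a < b) (hbr : b ≤ r)
    (hμ0 : μ (Ioo a b) = 0) :
    ν (Ioo 0 b) = 0 :=
  stmt_3_general r μ ν hνsupp htrans a b ha hab hbr hμ0
end

section
/- Let m ≥ 0 and let C > 0. For each n let F_n = (F_{n,0}, …, F_{n,m}) be a tuple of holomorphic functions on an open neighbourhood of the closed unit disc in ℂ, without common zeros, whose Nevanlinna characteristic satisfies T_{F_n}(1) ≤ C for all n, where T_F(r) := (1/2π) ∫₀^{2π} (1/2)·log( ∑_j |F_j(r·e^{iθ})|² ) dθ − (1/2)·log( ∑_j |F_j(0)|² ). Then there exist a strictly increasing sequence of indices n_k, nowhere-vanishing holomorphic functions λ_k on the open unit disc Δ, and holomorphic functions g_0, …, g_m on Δ, not all identically zero, such that for each j the functions λ_k·F_{n_k,j} converge to g_j uniformly on compact subsets of Δ. 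-/
/-!
Each tuple `F` is rescaled by the nowhere-vanishing factor `exp (-q)`, where `q` is a polynomial
whose real part dominates `log ‖F‖` on the unit circle and exceeds the circle average of `log ‖F‖`
by at most `2` at the origin. Such a `q` exists because real trigonometric polynomials, which are
uniformly dense among continuous functions on the circle, are real parts of polynomials there, and
the real part of a polynomial satisfies the mean value property. The rescaled tuples are bounded by
`1` on the circle, so by the Cauchy estimates their Taylor coefficients at `0` lie in a compact
product of balls; a subsequence of the coefficients converges, and then the power series converge
locally uniformly on the disc. The bound `T_F(1) ≤ C` keeps `‖exp (-q 0) F 0‖²` above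
`exp (-2C - 4)`, so the limit does not vanish at the origin.
-/

open Complex Real Filter Metric Topology

section Approximation

open Polynomial ComplexConjugate

-- Phrased with `conj` rather than with real parts so that it survives complex scalar multiples.
lemma exists_polynomial_add_conj_of_mem_span_fourier {w : C(AddCircle (2 * π), ℂ)}
    (hw : w ∈ Submodule.span ℂ (Set.range (fourier (T := 2 * π)))) :
    ∃ p q : ℂ[X], ∀ x, w x = p.eval ↑(AddCircle.toCircle x)
      + conj (q.eval ↑(AddCircle.toCircle x)) := by
  induction hw using Submodule.span_induction with
  | mem w hw =>
    obtain ⟨n, rfl⟩ := hw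
    rcases Int.eq_nat_or_neg n with ⟨k, rfl | rfl⟩
    · exact ⟨X ^ k, 0, fun x => by simp [fourier_apply, AddCircle.toCircle_nsmul]⟩
    · refine ⟨0, X ^ k, fun x => ?_⟩
      rw [fourier_neg, fourier_apply]
      simp [AddCircle.toCircle_nsmul]
  | zero => exact ⟨0, 0, fun x => by simp⟩
  | add w w' _ _ hw hw' =>
    obtain ⟨p, q, h⟩ := hw
    obtain ⟨p', q', h'⟩ := hw'
    refine ⟨p + p', q + q', fun x => ?_⟩
    simp only [ContinuousMap.add_apply, h, h', eval_add, map_add]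
    ring
  | smul c w _ hw =>
    obtain ⟨p, q, h⟩ := hw
    exact ⟨C c * p, C (conj c) * q, fun x => by simp [h]; ring⟩

lemma exists_polynomial_abs_re_sub_lt {u : ℂ → ℝ} (hu : ContinuousOn u (sphere 0 1))
    {ε : ℝ} (hε : 0 < ε) :
    ∃ p : ℂ[X], ∀ z ∈ sphere (0:ℂ) 1, |(p.eval z).re - u z| < ε := by
  have : Fact (0 < 2 * π) := ⟨two_pi_pos⟩
  let V : C(AddCircle (2 * π), ℂ) :=
    ⟨fun x => (u (AddCircle.toCircle x) : ℂ), continuous_ofReal.comp <|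
      hu.comp_continuous (by fun_prop) fun x => by simp [Circle.norm_coe]⟩
  have hV : V ∈ closure (Submodule.span ℂ (Set.range (fourier (T := 2 * π))) : Set _) := by
    rw [← Submodule.topologicalClosure_coe, span_fourier_closure_eq_top]
    trivial
  obtain ⟨w, hw, hVw⟩ := Metric.mem_closure_iff.mp hV ε hε
  obtain ⟨p, q, hpq⟩ := exists_polynomial_add_conj_of_mem_span_fourier hw
  refine ⟨p + q, fun z hz => ?_⟩
  obtain ⟨x, hx⟩ := (AddCircle.homeomorphCircle two_pi_pos.ne').surjective
    ⟨z, by simpa [Submonoid.unitSphere] using hz⟩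
  obtain rfl : (AddCircle.toCircle x : ℂ) = z := by
    rw [← AddCircle.homeomorphCircle_apply two_pi_pos.ne', hx]
  calc |((p + q).eval ↑(AddCircle.toCircle x)).re - u (AddCircle.toCircle x)|
      = |(w x - V x).re| := by simp [V, hpq]
    _ ≤ ‖w x - V x‖ := abs_re_le_norm _
    _ ≤ dist w V := by rw [← dist_eq_norm]; exact ContinuousMap.dist_apply_le_dist x
    _ < ε := by rwa [dist_comm]

lemma circleAverage_re_eval (p : ℂ[X]) (c : ℂ) (R : ℝ) :
    circleAverage (fun z => (p.eval z).re) c R = (p.eval c).re := by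
  rw [← reCLM_apply, ← p.differentiable.diffContOnCl.circleAverage]
  exact reCLM.circleAverage_comp_comm p.continuous.continuousOn.circleIntegrable'

lemma exists_polynomial_le_re_on_sphere {u : ℂ → ℝ} (hu : ContinuousOn u (sphere 0 1)) :
    ∃ p : ℂ[X], (∀ z ∈ sphere (0:ℂ) 1, u z ≤ (p.eval z).re) ∧
      (p.eval 0).re ≤ circleAverage u 0 1 + 2 := by
  obtain ⟨p, hp⟩ := exists_polynomial_abs_re_sub_lt hu one_pos
  refine ⟨p + 1, fun z hz => ?_, ?_⟩
  · have := (abs_lt.mp (hp z hz)).1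
    simp only [eval_add, eval_one, add_re, one_re]
    linarith
  · calc ((p + 1).eval 0).re = circleAverage (fun z => ((p + 1).eval z).re) 0 1 :=
          (circleAverage_re_eval _ 0 1).symm
      _ ≤ circleAverage (fun z => u z + 2) 0 1 := by
          apply circleAverage_mono
            (continuous_re.comp (p + 1).continuous).continuousOn.circleIntegrable'
            ((hu.add continuousOn_const).circleIntegrable zero_le_one)
          intro z hz
          have := (abs_lt.mp (hp z (by simpa using hz))).2
          simp only [Function.comp_apply, Pi.add_apply, eval_add, eval_one, add_re, one_re]
          linarith
      _ = circleAverage u 0 1 + 2 := by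
          rw [circleAverage_fun_add (hu.circleIntegrable zero_le_one)
            (circleIntegrable_const _ _ _), circleAverage_const]

end Approximation

section LogEuclNorm

variable {ι : Type*} [Fintype ι]

noncomputable def logEuclNorm (x : ι → ℂ) : ℝ := (1 / 2) * Real.log (∑ j, ‖x j‖ ^ 2)

noncomputable def nevanlinnaCharacteristic (F : ι → ℂ → ℂ) (r : ℝ) : ℝ :=
  circleAverage (fun z => logEuclNorm (F · z)) 0 r - logEuclNorm (F · 0)

lemma nevanlinnaCharacteristic_one_eq (F : ι → ℂ → ℂ) :
    nevanlinnaCharacteristic F 1 = (2 * π)⁻¹ *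
        (∫ θ in (0 : ℝ)..(2 * π), (1 / 2) * Real.log (∑ j, ‖F j (cexp (θ * I))‖ ^ 2)) -
      (1 / 2) * Real.log (∑ j, ‖F j 0‖ ^ 2) := by
  simp [nevanlinnaCharacteristic, circleAverage_def, circleMap, logEuclNorm]

lemma sum_norm_sq_pos {E : Type*} [NormedAddCommGroup E] {x : ι → E} (hx : ∃ j, x j ≠ 0) :
    0 < ∑ j, ‖x j‖ ^ 2 := by
  obtain ⟨j, hj⟩ := hx
  exact Finset.sum_pos' (fun _ _ => by positivity) ⟨j, Finset.mem_univ j, by positivity⟩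

lemma norm_le_exp_logEuclNorm (x : ι → ℂ) (j : ι) : ‖x j‖ ≤ rexp (logEuclNorm x) := by
  refine (pow_le_pow_iff_left₀ (norm_nonneg _) (Real.exp_nonneg _) two_ne_zero).mp ?_
  calc ‖x j‖ ^ 2 ≤ ∑ i, ‖x i‖ ^ 2 :=
        Finset.single_le_sum (f := fun i => ‖x i‖ ^ 2) (fun i _ => by positivity)
          (Finset.mem_univ j)
    _ ≤ rexp (Real.log (∑ i, ‖x i‖ ^ 2)) := Real.le_exp_log _
    _ = rexp (logEuclNorm x) ^ 2 := by rw [← Real.exp_nat_mul, logEuclNorm]; push_cast; ring_nf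

lemma sum_norm_exp_neg_mul_sq {x : ι → ℂ} (hx : ∃ j, x j ≠ 0) (w : ℂ) :
    ∑ j, ‖cexp (-w) * x j‖ ^ 2 = rexp (2 * (logEuclNorm x - w.re)) := by
  simp only [norm_mul, mul_pow, norm_exp, neg_re, ← Finset.mul_sum]
  unfold logEuclNorm
  rw [mul_sub, ← mul_assoc, mul_one_div_cancel two_ne_zero, one_mul, sub_eq_neg_add,
    Real.exp_add, Real.exp_log (sum_norm_sq_pos hx), ← Real.exp_nat_mul]
  push_cast; ring_nf

lemma continuousOn_logEuclNorm {F : ι → ℂ → ℂ} {s : Set ℂ} (hF : ∀ j, ContinuousOn (F j) s)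
    (hnc : ∀ z ∈ s, ∃ j, F j z ≠ 0) : ContinuousOn (fun z => logEuclNorm (F · z)) s :=
  continuousOn_const.mul <|
    (continuousOn_finsetSum _ fun j _ => (hF j).norm.pow 2).log
      fun z hz => (sum_norm_sq_pos (hnc z hz)).ne'

theorem exists_differentiable_norm_exp_neg_mul_le_one {F : ι → ℂ → ℂ}
    (hF : ∀ j, ContinuousOn (F j) (sphere 0 1)) (hnc : ∀ z ∈ sphere (0:ℂ) 1, ∃ j, F j z ≠ 0)
    (h0 : ∃ j, F j 0 ≠ 0) :
    ∃ q : ℂ → ℂ, Differentiable ℂ q ∧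
      (∀ j, ∀ z ∈ sphere (0:ℂ) 1, ‖cexp (-q z) * F j z‖ ≤ 1) ∧
      rexp (-2 * nevanlinnaCharacteristic F 1 - 4) ≤ ∑ j, ‖cexp (-q 0) * F j 0‖ ^ 2 := by
  obtain ⟨p, hp_le, hp0⟩ := exists_polynomial_le_re_on_sphere (continuousOn_logEuclNorm hF hnc)
  refine ⟨fun z => p.eval z, p.differentiable, fun j z hz => ?_, ?_⟩
  · calc ‖cexp (-p.eval z) * F j z‖ = rexp (-(p.eval z).re) * ‖F j z‖ := by
          rw [norm_mul, norm_exp, neg_re]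
      _ ≤ rexp (-(p.eval z).re) * rexp (logEuclNorm (F · z)) :=
          mul_le_mul_of_nonneg_left (norm_le_exp_logEuclNorm (F · z) j) (Real.exp_nonneg _)
      _ ≤ 1 := by rw [← Real.exp_add]; exact Real.exp_le_one_iff.mpr (by linarith [hp_le z hz])
  · rw [sum_norm_exp_neg_mul_sq h0, nevanlinnaCharacteristic]
    exact Real.exp_le_exp.mpr (by linarith)

end LogEuclNorm

section PowerSeries

variable {E : Type*} [NormedAddCommGroup E] [NormedSpace ℂ E]

lemma norm_coeff_cauchyPowerSeries_le {f : ℂ → E} {c : ℂ} {R M : ℝ}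
    (hf : ContinuousOn f (sphere c |R|)) (hM : ∀ z ∈ sphere c |R|, ‖f z‖ ≤ M) (n : ℕ) :
    ‖(cauchyPowerSeries f c R).coeff n‖ ≤ M * |R|⁻¹ ^ n := by
  rw [← FormalMultilinearSeries.norm_apply_eq_norm_coef]
  refine (norm_cauchyPowerSeries_le f c R n).trans ?_
  gcongr
  exact circleAverage_mono_on_of_le_circle hf.norm.circleIntegrable' hM

lemma summable_norm_pow_smul {a : ℕ → E} {M r : ℝ} (ha : ∀ i, ‖a i‖ ≤ M) (hr : r < 1) {z : ℂ}
    (hz : ‖z‖ ≤ r) : Summable fun i => ‖z ^ i • a i‖ := by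
  refine Summable.of_nonneg_of_le (fun _ => norm_nonneg _) (fun i => ?_)
    ((summable_geometric_of_lt_one ((norm_nonneg z).trans hz) hr).mul_right M)
  rw [norm_smul, norm_pow]
  exact mul_le_mul (pow_le_pow_left₀ (norm_nonneg _) hz i) (ha i) (norm_nonneg _)
    (pow_nonneg ((norm_nonneg z).trans hz) i)

variable [CompleteSpace E]

lemma tendstoUniformlyOn_tsum_pow_smul {ι : Type*} {l : Filter ι} [l.NeBot] {a : ι → ℕ → E}
    {b : ℕ → E} {M r : ℝ} (hr : r < 1) (ha : ∀ k i, ‖a k i‖ ≤ M)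
    (hab : ∀ i, Tendsto (a · i) l (𝓝 (b i))) :
    TendstoUniformlyOn (fun k z => ∑' i, z ^ i • a k i) (fun z => ∑' i, z ^ i • b i) l
      (closedBall (0 : ℂ) r) := by
  rcases lt_or_ge r 0 with hr0 | hr0
  · simp [closedBall_eq_empty.mpr hr0, tendstoUniformlyOn_empty]
  have hb : ∀ i, ‖b i‖ ≤ M := fun i =>
    le_of_tendsto (tendsto_norm.comp (hab i)) (Eventually.of_forall fun k => ha k i)
  have hdiff : ∀ k i, ‖a k i - b i‖ ≤ 2 * M := fun k i => by
    linarith [norm_sub_le (a k i) (b i), ha k i, hb i]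
  have hgeom := (summable_geometric_of_lt_one hr0 hr).mul_right (2 * M)
  have hsmall : Tendsto (fun k => ∑' i, r ^ i * ‖a k i - b i‖) l (𝓝 0) := by
    simpa using tendsto_tsum_of_dominated_convergence (f := fun k i => r ^ i * ‖a k i - b i‖)
      (g := fun _ => 0) hgeom
      (fun i => by simpa using ((hab i).sub_const (b i)).norm.const_mul (r ^ i))
      (Eventually.of_forall fun k i => by
        rw [norm_mul, norm_norm, norm_pow, Real.norm_of_nonneg hr0]
        gcongr
        exact hdiff k i)
  rw [Metric.tendstoUniformlyOn_iff]
  intro ε hε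
  filter_upwards [hsmall.eventually (gt_mem_nhds hε)] with k hk z hz
  rw [mem_closedBall_zero_iff] at hz
  calc dist (∑' i, z ^ i • b i) (∑' i, z ^ i • a k i)
      = ‖∑' i, z ^ i • (a k i - b i)‖ := by
        rw [dist_comm, dist_eq_norm, ← Summable.tsum_sub
          (summable_norm_pow_smul (ha k) hr hz).of_norm (summable_norm_pow_smul hb hr hz).of_norm]
        simp_rw [smul_sub]
    _ ≤ ∑' i, ‖z ^ i • (a k i - b i)‖ :=
        norm_tsum_le_tsum_norm (summable_norm_pow_smul (hdiff k) hr hz)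
    _ ≤ ∑' i, r ^ i * ‖a k i - b i‖ := by
        refine Summable.tsum_le_tsum (fun i => ?_) (summable_norm_pow_smul (hdiff k) hr hz)
          (hgeom.of_nonneg_of_le (fun i => by positivity) fun i => by gcongr; exact hdiff k i)
        rw [norm_smul, norm_pow]
        gcongr
    _ < ε := hk

theorem exists_strictMono_tendstoLocallyUniformlyOn_of_norm_le [ProperSpace E]
    {f : ℕ → ℂ → E} {M : ℝ} (hf : ∀ n, DiffContOnCl ℂ (f n) (ball 0 1))
    (hM : ∀ n, ∀ z ∈ sphere (0 : ℂ) 1, ‖f n z‖ ≤ M) :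
    ∃ φ : ℕ → ℕ, StrictMono φ ∧ ∃ g : ℂ → E,
      TendstoLocallyUniformlyOn (fun k => f (φ k)) g atTop (ball 0 1) := by
  set a : ℕ → ℕ → E := fun n i => (cauchyPowerSeries (f n) 0 1).coeff i
  have ha : ∀ n i, ‖a n i‖ ≤ M := fun n i => by
    have hcont : ContinuousOn (f n) (sphere 0 |1|) := by
      rw [abs_one]
      exact (hf n).continuousOn_ball.mono sphere_subset_closedBall
    simpa using norm_coeff_cauchyPowerSeries_le hcont (by simpa using hM n) i
  have hsum : ∀ n, Set.EqOn (fun z => ∑' i, z ^ i • a n i) (f n) (ball 0 1) := fun n z hz => by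
    have hps := (hf n).hasFPowerSeriesOnBall (R := 1) one_pos
    rw [NNReal.coe_one] at hps
    have hz' : z ∈ eball (0 : ℂ) (1 : NNReal) := by rwa [eball_coe, NNReal.coe_one]
    simpa [a, FormalMultilinearSeries.sum, FormalMultilinearSeries.apply_eq_pow_smul_coeff]
      using (hps.sum hz').symm
  obtain ⟨b, -, φ, hφ, hab⟩ :=
    (isCompact_univ_pi fun _ => isCompact_closedBall (0 : E) M).isSeqCompact
      fun n => Set.mem_univ_pi.2 fun i => mem_closedBall_zero_iff.2 (ha n i)
  refine ⟨φ, hφ, fun z => ∑' i, z ^ i • b i, ?_⟩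
  refine (tendstoLocallyUniformlyOn_of_forall_exists_nhds fun z hz => ?_).congr
    fun k => hsum (φ k)
  rw [mem_ball_zero_iff] at hz
  refine ⟨closedBall 0 ((‖z‖ + 1) / 2),
    mem_nhdsWithin_of_mem_nhds (closedBall_mem_nhds_of_mem ?_),
    tendstoUniformlyOn_tsum_pow_smul (by linarith) (fun k => ha (φ k)) fun i => ?_⟩
  · rw [mem_ball_zero_iff]; linarith
  · exact tendsto_pi_nhds.1 hab i

end PowerSeries

theorem stmt_11_general (m : ℕ) (C : ℝ)
    (F : ℕ → Fin (m + 1) → ℂ → ℂ)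
    (U : ℕ → Set ℂ)
    (hUsub : ∀ n, Metric.closedBall (0:ℂ) 1 ⊆ U n)
    (hF : ∀ n j, DifferentiableOn ℂ (F n j) (U n))
    (hnc : ∀ n, ∀ z ∈ Metric.closedBall (0:ℂ) 1, ∃ j, F n j z ≠ 0)
    (hT : ∀ n,
      (2 * Real.pi)⁻¹ *
            (∫ θ in (0:ℝ)..(2 * Real.pi),
              (1 / 2) *
                Real.log (∑ j, ‖F n j (Complex.exp (θ * Complex.I))‖ ^ 2)) -
          (1 / 2) * Real.log (∑ j, ‖F n j 0‖ ^ 2) ≤ C) :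
    ∃ nk : ℕ → ℕ, StrictMono nk ∧
      ∃ lam : ℕ → ℂ → ℂ, ∃ g : Fin (m + 1) → ℂ → ℂ,
        (∀ k, DifferentiableOn ℂ (lam k) (Metric.ball (0:ℂ) 1)) ∧
        (∀ k, ∀ z ∈ Metric.ball (0:ℂ) 1, lam k z ≠ 0) ∧
        (∀ j, DifferentiableOn ℂ (g j) (Metric.ball (0:ℂ) 1)) ∧
        (∃ j, ∃ z ∈ Metric.ball (0:ℂ) 1, g j z ≠ 0) ∧
        (∀ j, ∀ K : Set ℂ, K ⊆ Metric.ball (0:ℂ) 1 → IsCompact K →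
          TendstoUniformlyOn (fun k z => lam k z * F (nk k) j z) (g j) atTop K) := by
  choose q hq_diff hq_le hq_low using fun n => exists_differentiable_norm_exp_neg_mul_le_one
    (fun j => ((hF n j).mono (hUsub n)).continuousOn.mono sphere_subset_closedBall)
    (fun z hz => hnc n z (sphere_subset_closedBall hz)) (hnc n 0 (by simp))
  set Ψ : ℕ → ℂ → Fin (m + 1) → ℂ := fun n z j => cexp (-q n z) * F n j z
  have hΨ : ∀ n, DiffContOnCl ℂ (Ψ n) (ball 0 1) := fun n =>
    (differentiableOn_pi.2 fun j => (hq_diff n).neg.cexp.differentiableOn.mul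
      (hF n j)).diffContOnCl_ball (hUsub n)
  obtain ⟨φ, hφ, G, hG⟩ := exists_strictMono_tendstoLocallyUniformlyOn_of_norm_le hΨ
    fun n z hz => (pi_norm_le_iff_of_nonneg zero_le_one).2 fun j => hq_le n j z hz
  have hGj : ∀ j, TendstoLocallyUniformlyOn (fun k z => Ψ (φ k) z j) (G · j) atTop (ball 0 1) :=
    fun j => (Pi.uniformContinuous_proj _ j).comp_tendstoLocallyUniformlyOn hG
  have hlow : ∀ n, rexp (-2 * C - 4) ≤ ∑ j, ‖Ψ n 0 j‖ ^ 2 := fun n => by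
    have hTn := hT n
    rw [← nevanlinnaCharacteristic_one_eq] at hTn
    exact (Real.exp_le_exp.2 (by linarith)).trans (hq_low n)
  have hcont : Continuous fun v : Fin (m + 1) → ℂ => ∑ j, ‖v j‖ ^ 2 := by fun_prop
  have hlim : Tendsto (fun k => ∑ j, ‖Ψ (φ k) 0 j‖ ^ 2) atTop (𝓝 (∑ j, ‖G 0 j‖ ^ 2)) :=
    (hcont.tendsto (G 0)).comp (hG.tendsto_at (mem_ball_self one_pos))
  obtain ⟨j, -, hj⟩ := Finset.exists_ne_zero_of_sum_ne_zero
    ((Real.exp_pos _).trans_le (ge_of_tendsto' hlim fun k => hlow (φ k))).ne'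
  refine ⟨φ, hφ, fun k z => cexp (-q (φ k) z), fun j z => G z j,
    fun k => (hq_diff _).neg.cexp.differentiableOn, fun k z _ => Complex.exp_ne_zero _,
    fun j => (hGj j).differentiableOn (Eventually.of_forall fun k =>
      (differentiableOn_pi.1 (hΨ (φ k)).differentiableOn) j) isOpen_ball,
    ⟨j, 0, mem_ball_self one_pos, fun h => hj (by simp [h])⟩,
    fun j K hK hKc =>
      (tendstoLocallyUniformlyOn_iff_forall_isCompact isOpen_ball).1 (hGj j) K hK hKc⟩

/-- Paper's Lemma 1.9: a sequence of holomorphic discs in `ℙᵐ`, defined up to the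
boundary and with uniformly bounded Nevanlinna characteristic, admits homogeneous
coordinate representatives which, after passing to a subsequence and rescaling by
nowhere-vanishing holomorphic functions, converge uniformly on compact subsets of the
unit disc to a tuple of holomorphic functions not all identically zero. -/
theorem stmt_11 (m : ℕ) (C : ℝ)
    (F : ℕ → Fin (m + 1) → ℂ → ℂ)
    (U : ℕ → Set ℂ) (hUopen : ∀ n, IsOpen (U n))
    (hUsub : ∀ n, Metric.closedBall (0:ℂ) 1 ⊆ U n)
    (hF : ∀ n j, DifferentiableOn ℂ (F n j) (U n))
    (hnc : ∀ n, ∀ z ∈ Metric.closedBall (0:ℂ) 1, ∃ j, F n j z ≠ 0)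
    (hT : ∀ n,
      (2 * Real.pi)⁻¹ *
            (∫ θ in (0:ℝ)..(2 * Real.pi),
              (1 / 2) *
                Real.log (∑ j, ‖F n j (Complex.exp (θ * Complex.I))‖ ^ 2)) -
          (1 / 2) * Real.log (∑ j, ‖F n j 0‖ ^ 2) ≤ C) :
    ∃ nk : ℕ → ℕ, StrictMono nk ∧
      ∃ lam : ℕ → ℂ → ℂ, ∃ g : Fin (m + 1) → ℂ → ℂ,
        (∀ k, DifferentiableOn ℂ (lam k) (Metric.ball (0:ℂ) 1)) ∧
        (∀ k, ∀ z ∈ Metric.ball (0:ℂ) 1, lam k z ≠ 0) ∧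
        (∀ j, DifferentiableOn ℂ (g j) (Metric.ball (0:ℂ) 1)) ∧
        (∃ j, ∃ z ∈ Metric.ball (0:ℂ) 1, g j z ≠ 0) ∧
        (∀ j, ∀ K : Set ℂ, K ⊆ Metric.ball (0:ℂ) 1 → IsCompact K →
          TendstoUniformlyOn (fun k z => lam k z * F (nk k) j z) (g j) atTop K) :=
  stmt_11_general m C F U hUsub hF hnc hT
end

section
/- Let n ≥ 1, let Ω ⊆ ℂⁿ be open and let x ∈ Ω. Assume that every sequence (f_k) of holomorphic maps from the open unit disc Δ to Ω with f_k(0) = x admits a subsequence converging uniformly on compact subsets of Δ (to some continuous map Δ → ℂⁿ). Then for every open set V with x ∈ V ⊆ Ω there is a constant c = c(x,V) > 0 such that c·k_V(x,v) ≤ k_Ω(x,v) ≤ k_V(x,v) for every v ∈ ℂⁿ. -/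
/-!
Normality makes the holomorphic discs `f : Δ → Ω` with `f 0 = x` equicontinuous at `0`: if
discs `f_k` had points `z_k → 0` with `f_k z_k` outside a ball `B(x, r) ⊆ V`, a locally
uniformly convergent subsequence with limit `g` would give `f_k z_k → g 0 = x`. Hence there
is `δ ∈ (0, 1]` such that every such disc maps `δΔ` into `V`, and `w ↦ f (δ w)` is a disc in
`V` with derivative `δ f'(0)` at `0`; this gives `δ k_V ≤ k_Ω`. The other inequality holds
because discs in `V` are discs in `Ω`.
-/

open Complex Real Filter Metric Set Topology

/-- The infinitesimal Kobayashi pseudometric of an open set `W ⊆ ℂⁿ`: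
`k_W(x,v) = inf { 1/R : ∃ f : Δ → W holomorphic, f 0 = x, f′(0) = R·v }`, with the
convention `inf ∅ = +∞`. -/
noncomputable def kobMetric (n : ℕ) (W : Set (Fin n → ℂ)) (x v : Fin n → ℂ) : ENNReal :=
  sInf {c : ENNReal | ∃ R : ℝ, 0 < R ∧ c = ENNReal.ofReal (1 / R) ∧
    ∃ f : ℂ → (Fin n → ℂ), DifferentiableOn ℂ f (ball (0:ℂ) 1) ∧
      Set.MapsTo f (ball (0:ℂ) 1) W ∧ f 0 = x ∧ deriv f 0 = R • v}

theorem exists_forall_mapsTo_ball_of_forall_subseq_tendstoLocallyUniformlyOn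
    {E : Type*} [MetricSpace E] {P : (ℂ → E) → Prop} {x : E}
    (hP₀ : ∀ f, P f → f 0 = x)
    (hP : ∀ f : ℕ → ℂ → E, (∀ k, P (f k)) →
      ∃ φ : ℕ → ℕ, StrictMono φ ∧ ∃ g : ℂ → E, ContinuousOn g (ball 0 1) ∧
        TendstoLocallyUniformlyOn (fun k => f (φ k)) g atTop (ball 0 1))
    {r : ℝ} (hr : 0 < r) :
    ∃ δ, 0 < δ ∧ ∀ f, P f → MapsTo f (ball 0 δ) (ball x r) := by
  by_contra! h
  have hseq : ∀ k : ℕ, ∃ f, P f ∧ ∃ z ∈ ball (0 : ℂ) (1 / (k + 1)), f z ∉ ball x r := by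
    intro k
    obtain ⟨f, hf, hmaps⟩ := h (1 / (k + 1)) Nat.one_div_pos_of_nat
    simp only [MapsTo, not_forall, exists_prop] at hmaps
    exact ⟨f, hf, hmaps⟩
  choose f hf z hz hfz using hseq
  obtain ⟨φ, hφ, g, hg, hfg⟩ := hP f hf
  have h0 : (0 : ℂ) ∈ ball 0 1 := mem_ball_self one_pos
  have hz_lim : Tendsto z atTop (𝓝[ball 0 1] 0) := by
    refine tendsto_nhdsWithin_iff.2 ⟨?_, Eventually.of_forall fun k => ?_⟩
    · refine tendsto_iff_dist_tendsto_zero.2 (squeeze_zero (fun _ => dist_nonneg)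
        (fun k => (hz k).le) tendsto_one_div_add_atTop_nhds_zero_nat)
    · simpa using ball_subset_ball (Nat.one_div_le_one_div (Nat.zero_le k)) (hz k)
  have hg₀ : g 0 = x := tendsto_nhds_unique (hfg.tendsto_at h0) (by simp [hP₀ _ (hf _)])
  have hlim : Tendsto (fun k => f (φ k) (z (φ k))) atTop (𝓝 x) :=
    hg₀ ▸ hfg.tendsto_comp (hg.continuousWithinAt h0) h0 (hz_lim.comp hφ.tendsto_atTop)
  obtain ⟨k, hk⟩ := (hlim.eventually (ball_mem_nhds x hr)).exists
  exact hfz _ hk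

section Kobayashi

variable {n : ℕ} {W V : Set (Fin n → ℂ)} {x v : Fin n → ℂ}

theorem kobMetric_anti (hVW : V ⊆ W) : kobMetric n W x v ≤ kobMetric n V x v :=
  sInf_le_sInf fun _ ⟨R, hR, hc, f, hf, hfV, hf₀, hf'⟩ =>
    ⟨R, hR, hc, f, hf, hfV.mono_right hVW, hf₀, hf'⟩

theorem kobMetric_le {f : ℂ → Fin n → ℂ} {R : ℝ} (hR : 0 < R)
    (hf : DifferentiableOn ℂ f (ball 0 1)) (hfW : MapsTo f (ball 0 1) W) (hf₀ : f 0 = x)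
    (hf' : deriv f 0 = R • v) : kobMetric n W x v ≤ ENNReal.ofReal (1 / R) :=
  sInf_le ⟨R, hR, rfl, f, hf, hfW, hf₀, hf'⟩

theorem mapsTo_ofReal_mul_ball_one {δ : ℝ} (hδ : 0 < δ) :
    MapsTo (fun w : ℂ => (δ : ℂ) * w) (ball 0 1) (ball 0 δ) := fun w hw => by
  simpa [norm_mul, abs_of_pos hδ] using mul_lt_mul_of_pos_left (mem_ball_zero_iff.1 hw) hδ

theorem ofReal_mul_kobMetric_le {δ : ℝ} (hδ : 0 < δ) (hδ₁ : δ ≤ 1)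
    (hWV : ∀ f : ℂ → Fin n → ℂ, DifferentiableOn ℂ f (ball 0 1) → MapsTo f (ball 0 1) W →
      f 0 = x → MapsTo f (ball 0 δ) V) :
    ENNReal.ofReal δ * kobMetric n V x v ≤ kobMetric n W x v := by
  refine le_sInf ?_
  rintro _ ⟨R, hR, rfl, f, hf, hfW, hf₀, hf'⟩
  have hscale := mapsTo_ofReal_mul_ball_one hδ
  have hdisc : kobMetric n V x v ≤ ENNReal.ofReal (1 / (δ * R)) := by
    refine kobMetric_le (f := fun w => f (δ * w)) (mul_pos hδ hR) ?_ ?_ (by simpa using hf₀) ?_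
    · exact hf.comp (by fun_prop) (hscale.mono_right (ball_subset_ball hδ₁))
    · exact (hWV f hf hfW hf₀).comp hscale
    · rw [deriv_comp_mul_left, mul_zero, hf', ← coe_smul, smul_smul, ← ofReal_mul, coe_smul]
  calc ENNReal.ofReal δ * kobMetric n V x v
      ≤ ENNReal.ofReal δ * ENNReal.ofReal (1 / (δ * R)) := by gcongr
    _ = ENNReal.ofReal (1 / R) := by
      rw [← ENNReal.ofReal_mul hδ.le]
      congr 1
      field_simp

end Kobayashi

theorem stmt_12_general (n : ℕ) (Ω : Set (Fin n → ℂ))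
    (x : Fin n → ℂ)
    (hnorm : ∀ f : ℕ → ℂ → (Fin n → ℂ),
      (∀ k, DifferentiableOn ℂ (f k) (ball (0:ℂ) 1)) →
      (∀ k, Set.MapsTo (f k) (ball (0:ℂ) 1) Ω) →
      (∀ k, f k 0 = x) →
      ∃ nk : ℕ → ℕ, StrictMono nk ∧
        ∃ g : ℂ → (Fin n → ℂ), ContinuousOn g (ball (0:ℂ) 1) ∧
          TendstoLocallyUniformlyOn (fun k => f (nk k)) g atTop (ball (0:ℂ) 1)) :
    ∀ V : Set (Fin n → ℂ), IsOpen V → x ∈ V → V ⊆ Ω →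
      ∃ c : ℝ, 0 < c ∧ ∀ v : Fin n → ℂ,
        ENNReal.ofReal c * kobMetric n V x v ≤ kobMetric n Ω x v ∧
          kobMetric n Ω x v ≤ kobMetric n V x v := by
  intro V hV hxV hVΩ
  obtain ⟨r, hr, hrV⟩ := Metric.isOpen_iff.1 hV x hxV
  obtain ⟨δ, hδ, hδr⟩ :=
    exists_forall_mapsTo_ball_of_forall_subseq_tendstoLocallyUniformlyOn
      (P := fun f => DifferentiableOn ℂ f (ball 0 1) ∧ MapsTo f (ball 0 1) Ω ∧ f 0 = x)
      (fun _ hf => hf.2.2) (fun f hf => hnorm f (hf · |>.1) (hf · |>.2.1) (hf · |>.2.2)) hr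
  refine ⟨min δ 1, lt_min hδ one_pos, fun v => ⟨?_, kobMetric_anti hVΩ⟩⟩
  refine ofReal_mul_kobMetric_le (lt_min hδ one_pos) (min_le_right _ _) fun f hf hfΩ hf₀ => ?_
  exact ((hδr f ⟨hf, hfΩ, hf₀⟩).mono_left (ball_subset_ball (min_le_left _ _))).mono_right hrV

/-- Paper's Fact 2.10 (`kobcalc1`), for domains in `ℂⁿ`: if every sequence of
holomorphic discs in `Ω` centred at `x` has a locally uniformly convergent subsequence,
then the Kobayashi metric of `Ω` at `x` is comparable to that of any open neighbourhood
`V ⊆ Ω` of `x`. -/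
theorem stmt_12 (n : ℕ) (hn : 1 ≤ n) (Ω : Set (Fin n → ℂ)) (hΩ : IsOpen Ω)
    (x : Fin n → ℂ) (hx : x ∈ Ω)
    (hnorm : ∀ f : ℕ → ℂ → (Fin n → ℂ),
      (∀ k, DifferentiableOn ℂ (f k) (ball (0:ℂ) 1)) →
      (∀ k, Set.MapsTo (f k) (ball (0:ℂ) 1) Ω) →
      (∀ k, f k 0 = x) →
      ∃ nk : ℕ → ℕ, StrictMono nk ∧
        ∃ g : ℂ → (Fin n → ℂ), ContinuousOn g (ball (0:ℂ) 1) ∧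
          TendstoLocallyUniformlyOn (fun k => f (nk k)) g atTop (ball (0:ℂ) 1)) :
    ∀ V : Set (Fin n → ℂ), IsOpen V → x ∈ V → V ⊆ Ω →
      ∃ c : ℝ, 0 < c ∧ ∀ v : Fin n → ℂ,
        ENNReal.ofReal c * kobMetric n V x v ≤ kobMetric n Ω x v ∧
          kobMetric n Ω x v ≤ kobMetric n V x v :=
  stmt_12_general n Ω x hnorm
end

section
/- Let n ≥ 1, let X ⊆ ℂⁿ be open, let D ⊆ X be closed in X, and set Ω := X \ D. Let U be an open set whose closure Ū is compact and contained in Ω. Assume that every sequence (f_k) of holomorphic maps from the open unit disc Δ to Ω with f_k(0) ∈ Ū admits a subsequence converging uniformly on compact subsets of Δ (to some continuous map Δ → ℂⁿ). Then for every open set V with Ū ⊆ V ⊆ X there is a constant c = c(U,V) > 0 such that for every u ∈ U and every v ∈ ℂⁿ: c·k_{V\D}(u,v) ≤ k_Ω(u,v) ≤ k_{V\D}(u,v). -/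
open Complex Real Filter Metric
open scoped Topology

/-- Paper's Fact 2.11 (`kobcalc2`), for domains in `ℂⁿ`: uniform local computability of
the Kobayashi metric of `Ω = X \ D` near a relatively compact set `U`, under the
normality hypothesis for discs with origins in the closure of `U`. -/
theorem stmt_13 (n : ℕ) (hn : 1 ≤ n) (X D : Set (Fin n → ℂ)) (hX : IsOpen X)
    (hD : D ⊆ X) (hΩ : IsOpen (X \ D))
    (U : Set (Fin n → ℂ)) (hUopen : IsOpen U)
    (hUcomp : IsCompact (closure U)) (hUsub : closure U ⊆ X \ D)
    (hnorm : ∀ f : ℕ → ℂ → (Fin n → ℂ),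
      (∀ k, DifferentiableOn ℂ (f k) (ball (0:ℂ) 1)) →
      (∀ k, Set.MapsTo (f k) (ball (0:ℂ) 1) (X \ D)) →
      (∀ k, f k 0 ∈ closure U) →
      ∃ nk : ℕ → ℕ, StrictMono nk ∧
        ∃ g : ℂ → (Fin n → ℂ), ContinuousOn g (ball (0:ℂ) 1) ∧
          TendstoLocallyUniformlyOn (fun k => f (nk k)) g atTop (ball (0:ℂ) 1)) :
    ∀ V : Set (Fin n → ℂ), IsOpen V → closure U ⊆ V → V ⊆ X →
      ∃ c : ℝ, 0 < c ∧ ∀ u ∈ U, ∀ v : Fin n → ℂ,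
        ENNReal.ofReal c * kobMetric n (V \ D) u v ≤ kobMetric n (X \ D) u v ∧
          kobMetric n (X \ D) u v ≤ kobMetric n (V \ D) u v := by
  intro V hVopen hUV hVX
  -- Key claim: there is a uniform radius r such that every Kobayashi disc in Ω with
  -- origin in `closure U` maps the ball of radius r into V.
  have key : ∃ r : ℝ, 0 < r ∧ r < 1 ∧ ∀ f : ℂ → (Fin n → ℂ),
      DifferentiableOn ℂ f (ball (0:ℂ) 1) → Set.MapsTo f (ball (0:ℂ) 1) (X \ D) →
      f 0 ∈ closure U → Set.MapsTo f (ball (0:ℂ) r) V := by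
    by_contra hcon
    push_neg at hcon
    have h' : ∀ k : ℕ, ∃ f : ℂ → (Fin n → ℂ),
        DifferentiableOn ℂ f (ball (0:ℂ) 1) ∧ Set.MapsTo f (ball (0:ℂ) 1) (X \ D) ∧
        f 0 ∈ closure U ∧ ∃ z ∈ ball (0:ℂ) (1/(k+2 : ℝ)), f z ∉ V := by
      intro k
      obtain ⟨f, hf1, hf2, hf3, hf4⟩ := hcon (1/(k+2 : ℝ)) (by positivity)
        (by rw [div_lt_one (by positivity)]; linarith)
      refine ⟨f, hf1, hf2, hf3, ?_⟩
      rw [Set.MapsTo] at hf4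
      push_neg at hf4
      exact hf4
    choose f hf1 hf2 hf3 z hz1 hz2 using h'
    obtain ⟨nk, hnk, g, hg, hconv⟩ := hnorm f hf1 hf2 hf3
    have h0mem : (0:ℂ) ∈ ball (0:ℂ) 1 := by simp
    -- z (nk k) tends to 0
    have hzto : Tendsto (fun k => z (nk k)) atTop (𝓝 (0:ℂ)) := by
      rw [tendsto_iff_dist_tendsto_zero]
      apply squeeze_zero (fun k => dist_nonneg)
        (g := fun k : ℕ => 1/((k:ℝ)+1))
      · intro k
        have h1 : dist (z (nk k)) 0 < 1/((nk k : ℝ)+2) := mem_ball.mp (hz1 (nk k))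
        have h2 : (1:ℝ)/((nk k : ℝ)+2) ≤ 1/((k:ℝ)+1) := by
          apply one_div_le_one_div_of_le (by positivity)
          have hle : (k:ℝ) ≤ (nk k : ℝ) := Nat.cast_le.mpr hnk.le_apply
          push_cast
          linarith
        linarith
      · exact tendsto_one_div_add_atTop_nhds_zero_nat
    have hzmem : ∀ k, z (nk k) ∈ ball (0:ℂ) 1 := by
      intro k
      have h1 : dist (z (nk k)) 0 < 1/((nk k : ℝ)+2) := mem_ball.mp (hz1 (nk k))
      have h2 : (1:ℝ)/((nk k : ℝ)+2) ≤ 1 := by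
        rw [div_le_one (by positivity)]; push_cast; linarith
      exact mem_ball.mpr (lt_of_lt_of_le h1 h2)
    have hzto' : Tendsto (fun k => z (nk k)) atTop (𝓝[ball (0:ℂ) 1] 0) := by
      rw [tendsto_nhdsWithin_iff]
      exact ⟨hzto, Eventually.of_forall hzmem⟩
    have hlim : Tendsto (fun k => f (nk k) (z (nk k))) atTop (𝓝 (g 0)) :=
      hconv.tendsto_comp (hg.continuousWithinAt h0mem) h0mem hzto'
    have hg0 : g 0 ∈ closure U := by
      have hpt : Tendsto (fun k => f (nk k) 0) atTop (𝓝 (g 0)) :=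
        hconv.tendsto_at h0mem
      exact isClosed_closure.mem_of_tendsto hpt (Eventually.of_forall fun k => hf3 (nk k))
    have hVnhds : V ∈ 𝓝 (g 0) := hVopen.mem_nhds (hUV hg0)
    have := (hlim.eventually_mem hVnhds).exists
    obtain ⟨k, hk⟩ := this
    exact hz2 (nk k) hk
  obtain ⟨r, hr0, hr1, hkey⟩ := key
  refine ⟨r, hr0, fun u hu v => ?_⟩
  constructor
  · -- c * k_{V\D} ≤ k_Ω
    apply le_sInf
    rintro b ⟨R, hR, rfl, f, hd, hm, h0, hder⟩
    -- rescale: h z = f (r z)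
    set h : ℂ → (Fin n → ℂ) := fun z => f ((r:ℂ) * z) with hh
    have hmul : ∀ z : ℂ, z ∈ ball (0:ℂ) 1 → (r:ℂ) * z ∈ ball (0:ℂ) 1 := by
      intro z hz
      rw [mem_ball, dist_zero_right] at hz ⊢
      rw [norm_mul, Complex.norm_real, Real.norm_of_nonneg hr0.le]
      nlinarith [norm_nonneg z]
    have hdh : DifferentiableOn ℂ h (ball (0:ℂ) 1) :=
      hd.comp ((differentiable_id.const_mul ((r:ℂ))).differentiableOn) hmul
    have hmh : Set.MapsTo h (ball (0:ℂ) 1) ((V \ D) : Set (Fin n → ℂ)) := by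
      intro z hz
      have hb : (r:ℂ) * z ∈ ball (0:ℂ) r := by
        rw [mem_ball, dist_zero_right] at hz ⊢
        rw [norm_mul, Complex.norm_real, Real.norm_of_nonneg hr0.le]
        nlinarith [norm_nonneg z]
      have hV : f ((r:ℂ) * z) ∈ V :=
        hkey f hd hm (h0 ▸ subset_closure hu) hb
      have hΩ' : f ((r:ℂ) * z) ∈ X \ D := hm (hmul z hz)
      exact ⟨hV, hΩ'.2⟩
    have h00 : h 0 = u := by simp [hh, h0]
    have hderh : deriv h 0 = (r * R) • v := by
      have hfd : HasDerivAt f (R • v) 0 := by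
        have := (hd.differentiableAt (isOpen_ball.mem_nhds (mem_ball_self one_pos))).hasDerivAt
        rwa [hder] at this
      have hL : HasDerivAt (fun z : ℂ => (r:ℂ) * z) (r:ℂ) 0 := by
        simpa using (hasDerivAt_id (0:ℂ)).const_mul ((r:ℂ))
      have hfd' : HasDerivAt f (R • v) ((fun z : ℂ => (r:ℂ) * z) 0) := by
        simpa using hfd
      have hc : HasDerivAt h ((r:ℂ) • (R • v)) 0 := hfd'.scomp 0 hL
      rw [hc.deriv]
      funext i
      simp [Pi.smul_apply, smul_eq_mul, Complex.real_smul]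
      push_cast
      ring
    have hmem : ENNReal.ofReal (1 / (r * R)) ∈ {c : ENNReal | ∃ R' : ℝ, 0 < R' ∧
        c = ENNReal.ofReal (1 / R') ∧ ∃ f : ℂ → (Fin n → ℂ),
        DifferentiableOn ℂ f (ball (0:ℂ) 1) ∧
        Set.MapsTo f (ball (0:ℂ) 1) (V \ D) ∧ f 0 = u ∧ deriv f 0 = R' • v} :=
      ⟨r * R, by positivity, rfl, h, hdh, hmh, h00, hderh⟩
    have hle : kobMetric n (V \ D) u v ≤ ENNReal.ofReal (1 / (r * R)) := sInf_le hmem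
    calc ENNReal.ofReal r * kobMetric n (V \ D) u v
        ≤ ENNReal.ofReal r * ENNReal.ofReal (1 / (r * R)) := mul_le_mul_right hle _
      _ = ENNReal.ofReal (r * (1 / (r * R))) := (ENNReal.ofReal_mul hr0.le).symm
      _ = ENNReal.ofReal (1 / R) := by rw [mul_one_div]; congr 1; field_simp
  · -- monotonicity
    apply sInf_le_sInf
    rintro b ⟨R, hR, rfl, f, hd, hm, h0, hder⟩
    exact ⟨R, hR, rfl, f, hd, hm.mono_right (Set.diff_subset_diff_left hVX), h0, hder⟩
end
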